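/- For every orientation O of M and every element e ∈ E, exactly one of the following holds: (1) there exists a signed circuit C of M with e in its support such that O(f) = C(f) for every f in the support of C; (2) there exists a signed cocircuit D of M with e in its support such that O(f) = D(f) for every f in the support of D. -/

import Mathlib

/-!
Call a real vector `x` conforming to `O` if `O f * x f ≥ 0` for all `f`. Minty's painting lemma,
proved by deleting and contracting one coordinate at a time, gives a conforming vector nonzero at
`e` either in `ker A` or in its orthogonal complement, the row space of `A`. A conforming vector
of minimal support is elementary: every vector of the subspace supported inside its support is a
multiple of it. Scaled to take the value `O e` at `e`, it is then the unique solution of a linear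
system whose matrix, `A` (resp. `[Aᵀ | 1]`) with unit rows adjoined, is totally unimodular, so by
Cramer's rule its entries are signs: it is a signed circuit (resp. cocircuit) agreeing with `O`
on its support. Both cannot exist: a circuit and a cocircuit agreeing with `O` and nonzero at `e`
would have positive inner product, but the kernel is orthogonal to the row space.
-/

open Matrix

/-- A vector with all entries in `{-1,0,1}`. -/
def SignVec {m : ℕ} (C : Fin m → ℤ) : Prop := ∀ e, C e = -1 ∨ C e = 0 ∨ C e = 1

/-- A signed circuit of `A`. -/
def IsCircuit {r m : ℕ} (A : Matrix (Fin r) (Fin m) ℤ) (C : Fin m → ℤ) : Prop :=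
  SignVec C ∧ C ≠ 0 ∧ A.mulVec C = 0 ∧
    ∀ v : Fin m → ℤ, v ≠ 0 → A.mulVec v = 0 →
      {e | v e ≠ 0} ⊆ {e | C e ≠ 0} → {e | v e ≠ 0} = {e | C e ≠ 0}

/-- A signed cocircuit of `A`. -/
def IsCocircuit {r m : ℕ} (A : Matrix (Fin r) (Fin m) ℤ) (D : Fin m → ℤ) : Prop :=
  SignVec D ∧ D ≠ 0 ∧ (∃ y : Fin r → ℤ, D = Matrix.vecMul y A) ∧
    ∀ v : Fin m → ℤ, v ≠ 0 → (∃ y : Fin r → ℤ, v = Matrix.vecMul y A) →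
      {e | v e ≠ 0} ⊆ {e | D e ≠ 0} → {e | v e ≠ 0} = {e | D e ≠ 0}

/-- An orientation of the matroid: a function `E → {-1,1}`. -/
def IsOrientation {m : ℕ} (O : Fin m → ℤ) : Prop := ∀ e, O e = 1 ∨ O e = -1

open Function

section Conforms

variable {R ι : Type*}

def Conforms [Mul R] [Zero R] [LE R] (σ x : ι → R) : Prop := ∀ i, 0 ≤ σ i * x i

lemma Conforms.of_update_of_nonneg [DecidableEq ι] [MulZeroClass R] [Preorder R]
    {σ x : ι → R} {g : ι} (hx : Conforms σ (update x g 0)) (hg : 0 ≤ σ g * x g) : Conforms σ x := by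
  intro i
  rcases eq_or_ne i g with rfl | hi
  · exact hg
  · simpa [update_of_ne hi] using hx i

variable [CommRing R] [LinearOrder R] [IsStrictOrderedRing R]

lemma Conforms.of_update_of_neg [DecidableEq ι] {σ x : ι → R} {g : ι}
    (hx : Conforms σ (update x g 0)) (hg : σ g * x g < 0) :
    Conforms (update σ g (-σ g)) x := by
  intro i
  rcases eq_or_ne i g with rfl | hi
  · simp only [update_self]
    linarith
  · simpa [update_of_ne hi] using hx i

lemma mul_nonneg_of_conforms {s a b : R} (hs : s ≠ 0) (ha : 0 ≤ s * a) (hb : 0 ≤ s * b) :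
    0 ≤ a * b :=
  nonneg_of_mul_nonneg_left (by linear_combination mul_nonneg ha hb) (mul_self_pos.2 hs)

lemma dotProduct_pos_of_conforms [Fintype ι] {σ x y : ι → R} (hσ : ∀ i, σ i ≠ 0)
    (hx : Conforms σ x) (hy : Conforms σ y) {e : ι} (hxe : x e ≠ 0) (hye : y e ≠ 0) :
    0 < x ⬝ᵥ y :=
  Finset.sum_pos' (fun i _ => mul_nonneg_of_conforms (hσ i) (hx i) (hy i))
    ⟨e, Finset.mem_univ e, (mul_nonneg_of_conforms (hσ e) (hx e) (hy e)).lt_of_ne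
      (mul_ne_zero hxe hye).symm⟩

end Conforms

section Minty

variable {𝕜 ι : Type*} [Field 𝕜] [Fintype ι]

def orthogonalOn (T : Finset ι) (S : Set (ι → 𝕜)) : Submodule 𝕜 (ι → 𝕜) where
  carrier := {z | (∀ i ∉ T, z i = 0) ∧ ∀ x ∈ S, z ⬝ᵥ x = 0}
  add_mem' hz hw := ⟨fun i hi => by simp [hz.1 i hi, hw.1 i hi],
    fun x hx => by rw [add_dotProduct, hz.2 x hx, hw.2 x hx, add_zero]⟩
  zero_mem' := ⟨fun _ _ => rfl, fun _ _ => zero_dotProduct _⟩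
  smul_mem' c z hz := ⟨fun i hi => by simp [hz.1 i hi],
    fun x hx => by rw [smul_dotProduct, hz.2 x hx, smul_zero]⟩

lemma mem_orthogonalOn {T : Finset ι} {S : Set (ι → 𝕜)} {z : ι → 𝕜} :
    z ∈ orthogonalOn T S ↔ (∀ i ∉ T, z i = 0) ∧ ∀ x ∈ S, z ⬝ᵥ x = 0 := Iff.rfl

lemma mem_orthogonalOn_univ {S : Set (ι → 𝕜)} {z : ι → 𝕜} :
    z ∈ orthogonalOn Finset.univ S ↔ ∀ x ∈ S, z ⬝ᵥ x = 0 := by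
  simp [mem_orthogonalOn]

lemma ker_mulVecLin_eq_orthogonalOn {ρ : Type*} [Fintype ρ] [DecidableEq ρ] (B : Matrix ρ ι 𝕜) :
    (LinearMap.ker B.mulVecLin : Set (ι → 𝕜)) =
      orthogonalOn Finset.univ (LinearMap.range B.vecMulLinear : Set (ι → 𝕜)) := by
  ext x
  simp only [SetLike.mem_coe, LinearMap.mem_ker, mulVecLin_apply, mem_orthogonalOn_univ,
    LinearMap.mem_range, vecMulLinear_apply, forall_exists_index, forall_apply_eq_imp_iff]
  refine ⟨fun hx u => by rw [dotProduct_comm, ← dotProduct_mulVec, hx, dotProduct_zero],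
    fun hx => funext fun i => ?_⟩
  have := hx (Pi.single i 1)
  rwa [dotProduct_comm, ← dotProduct_mulVec, single_dotProduct, one_mul] at this

lemma range_vecMulLinear_eq_orthogonalOn {ρ : Type*} [Fintype ρ] [DecidableEq ρ] [DecidableEq ι]
    (B : Matrix ρ ι 𝕜) :
    (LinearMap.range B.vecMulLinear : Set (ι → 𝕜)) =
      orthogonalOn Finset.univ (LinearMap.ker B.mulVecLin : Set (ι → 𝕜)) := by
  ext z
  simp only [SetLike.mem_coe, LinearMap.mem_range, vecMulLinear_apply, mem_orthogonalOn_univ,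
    LinearMap.mem_ker, mulVecLin_apply]
  refine ⟨by rintro ⟨u, rfl⟩ x hx; rw [← dotProduct_mulVec, hx, dotProduct_zero], fun hz => ?_⟩
  have : dotProductEquiv 𝕜 ι z ∈ (LinearMap.ker B.mulVecLin).dualAnnihilator := by
    simpa [Submodule.mem_dualAnnihilator] using hz
  rw [← LinearMap.range_dualMap_eq_dualAnnihilator_ker] at this
  obtain ⟨ψ, hψ⟩ := this
  refine ⟨(dotProductEquiv 𝕜 ρ).symm ψ,
    (dotProductEquiv 𝕜 ι).injective (LinearMap.ext fun x => ?_)⟩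
  have := LinearMap.congr_fun hψ x
  simp only [LinearMap.dualMap_apply, mulVecLin_apply] at this
  rw [dotProductEquiv_apply_apply, ← dotProduct_mulVec, ← this]
  conv_rhs => rw [← (dotProductEquiv 𝕜 ρ).apply_symm_apply ψ]
  rfl

lemma update_zero_dotProduct [DecidableEq ι] (z x : ι → 𝕜) (g : ι) :
    update z g 0 ⬝ᵥ x = z ⬝ᵥ x - z g * x g := by
  have : update z g 0 = z - Pi.single g (z g) := by
    ext i
    rcases eq_or_ne i g with rfl | hi <;> simp [*]
  rw [this, sub_dotProduct, single_dotProduct]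

lemma contract_eq_orthogonalOn_delete [DecidableEq ι] {T : Finset ι} {V W : Set (ι → 𝕜)}
    (hV : V = orthogonalOn T W) (g : ι) :
    {x ∈ V | x g = 0} = orthogonalOn (T.erase g) ((update · g 0) '' W) := by
  subst hV
  ext z
  simp only [Set.mem_ofPred_eq, SetLike.mem_coe, mem_orthogonalOn, Finset.mem_erase, not_and_or,
    not_not, Set.forall_mem_image]
  constructor
  · rintro ⟨⟨hzT, hzW⟩, hzg⟩
    refine ⟨fun i hi => hi.elim (· ▸ hzg) (hzT i), fun y hy => ?_⟩
    rw [dotProduct_comm, update_zero_dotProduct, dotProduct_comm, hzW y hy, hzg, mul_zero,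
      sub_zero]
  · rintro ⟨hzT, hzW⟩
    have hzg : z g = 0 := hzT g (Or.inl rfl)
    refine ⟨⟨fun i hi => hzT i (Or.inr hi), fun y hy => ?_⟩, hzg⟩
    have := hzW hy
    rwa [dotProduct_comm, update_zero_dotProduct, dotProduct_comm, hzg, mul_zero, sub_zero]
      at this

lemma exists_dotProduct_eq_mul_apply {V : Submodule 𝕜 (ι → 𝕜)} {z : ι → 𝕜} {g : ι}
    (hz : ∀ x ∈ V, x g = 0 → z ⬝ᵥ x = 0) : ∃ c : 𝕜, ∀ x ∈ V, z ⬝ᵥ x = c * x g := by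
  by_cases h : ∀ x ∈ V, x g = 0
  · exact ⟨0, fun x hx => by rw [hz x hx (h x hx), zero_mul]⟩
  · obtain ⟨x₀, hx₀, hx₀g⟩ := not_forall₂.1 h
    refine ⟨z ⬝ᵥ x₀ / x₀ g, fun x hx => ?_⟩
    have := hz (x - (x g / x₀ g) • x₀) (V.sub_mem hx (V.smul_mem _ hx₀)) (by simp [hx₀g])
    rw [dotProduct_sub, dotProduct_smul, smul_eq_mul, sub_eq_zero] at this
    rw [this]
    field_simp

lemma delete_eq_orthogonalOn_contract [DecidableEq ι] {T : Finset ι} {V W : Set (ι → 𝕜)}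
    (hV : V = orthogonalOn T W) (hW : W = orthogonalOn T V) {g : ι} (hg : g ∈ T) :
    (update · g 0) '' W = orthogonalOn (T.erase g) {x ∈ V | x g = 0} := by
  ext z
  constructor
  · rintro ⟨y, hy, rfl⟩
    rw [hW] at hy
    refine ⟨fun i hi => ?_, fun x ⟨hx, hxg⟩ => ?_⟩
    · rcases eq_or_ne i g with rfl | hig
      · exact update_self ..
      · change update y g 0 i = 0
        rw [update_of_ne hig]
        exact hy.1 i fun hiT => hi (Finset.mem_erase.2 ⟨hig, hiT⟩)
    · rw [update_zero_dotProduct, hy.2 x hx, hxg, mul_zero, sub_zero]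
  · rintro ⟨hzT, hzV⟩
    have hzg : z g = 0 := hzT g (Finset.notMem_erase g T)
    obtain ⟨c, hc⟩ := exists_dotProduct_eq_mul_apply (V := orthogonalOn T W) (z := z) (g := g)
      fun x hx hxg => hzV x ⟨hV ▸ hx, hxg⟩
    refine ⟨z - c • Pi.single g 1, ?_, ?_⟩
    · rw [hW]
      refine ⟨fun i hi => ?_, fun x hx => ?_⟩
      · have hig : i ≠ g := fun h => hi (h ▸ hg)
        simp [hig, hzT i fun h => hi (Finset.mem_of_mem_erase h)]
      · rw [sub_dotProduct, smul_dotProduct, single_dotProduct, hc x (by rw [hV] at hx; exact hx)]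
        simp
    · ext i
      rcases eq_or_ne i g with rfl | hig
      · simp [hzg]
      · simp [hig]

variable [LinearOrder 𝕜] [IsStrictOrderedRing 𝕜] [DecidableEq ι]

lemma minty_singleton {V W : Set (ι → 𝕜)} {e : ι} (hV : V = orthogonalOn {e} W)
    (hW : W = orthogonalOn {e} V) {σ : ι → 𝕜} (hσ : ∀ i, σ i ≠ 0) :
    (∃ x ∈ V, Conforms σ x ∧ x e ≠ 0) ∨ (∃ y ∈ W, Conforms σ y ∧ y e ≠ 0) := by
  by_cases hWe : ∃ y ∈ W, y e ≠ 0
  · obtain ⟨y, hy, hye⟩ := hWe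
    rw [hW] at hy ⊢
    refine .inr ⟨(σ e * y e) • y, (orthogonalOn {e} V).smul_mem _ hy, fun i => ?_,
      by simp [hσ e, hye]⟩
    rcases eq_or_ne i e with rfl | hi
    · simp only [Pi.smul_apply, smul_eq_mul]
      nlinarith [sq_nonneg (σ i * y i)]
    · simp [hy.1 i (Finset.notMem_singleton.2 hi)]
  · push Not at hWe
    rw [hV]
    refine .inl ⟨Pi.single e (σ e), ⟨fun i hi => ?_, fun y hy => ?_⟩, fun i => ?_, by simp [hσ e]⟩
    · exact Pi.single_eq_of_ne (Finset.notMem_singleton.1 hi) _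
    · rw [single_dotProduct, hWe y hy, mul_zero]
    · rcases eq_or_ne i e with rfl | hi
      · simpa using mul_self_nonneg (σ i)
      · simp [hi]

theorem minty (T : Finset ι) {V W : Set (ι → 𝕜)} (hV : V = orthogonalOn T W)
    (hW : W = orthogonalOn T V) {σ : ι → 𝕜} (hσ : ∀ i, σ i ≠ 0) {e : ι} (he : e ∈ T) :
    (∃ x ∈ V, Conforms σ x ∧ x e ≠ 0) ∨ (∃ y ∈ W, Conforms σ y ∧ y e ≠ 0) := by
  induction T using Finset.strongInduction generalizing V W with | _ T ih => ?_
  by_cases hT : ∃ g ∈ T, g ≠ e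
  swap
  · push Not at hT
    rw [Finset.eq_singleton_iff_unique_mem.2 ⟨he, hT⟩] at hV hW
    exact minty_singleton hV hW hσ
  obtain ⟨g, hg, hge⟩ := hT
  have heT : e ∈ T.erase g := Finset.mem_erase.2 ⟨hge.symm, he⟩
  rcases ih _ (Finset.erase_ssubset hg) (contract_eq_orthogonalOn_delete hV g)
    (delete_eq_orthogonalOn_contract hV hW hg) heT with
    ⟨x, ⟨hx, -⟩, hxσ, hxe⟩ | ⟨_, ⟨y, hy, rfl⟩, hyσ, hye⟩
  · exact .inl ⟨x, hx, hxσ, hxe⟩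
  rcases ih _ (Finset.erase_ssubset hg) (contract_eq_orthogonalOn_delete hW g)
    (delete_eq_orthogonalOn_contract hW hV hg) heT with
    ⟨y', ⟨hy', -⟩, hy'σ, hy'e⟩ | ⟨_, ⟨x, hx, rfl⟩, hxσ, hxe⟩
  · exact .inr ⟨y', hy', hy'σ, hy'e⟩
  simp only [update_of_ne hge.symm] at hxe hye
  by_cases hxg : 0 ≤ σ g * x g
  · exact .inl ⟨x, hx, hxσ.of_update_of_nonneg hxg, hxe⟩
  by_cases hyg : 0 ≤ σ g * y g
  · exact .inr ⟨y, hy, hyσ.of_update_of_nonneg hyg, hye⟩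
  -- otherwise `x` and `y` both conform to `σ` with its sign at `g` flipped
  have hσ' : ∀ i, update σ g (-σ g) i ≠ 0 := fun i => by
    rcases eq_or_ne i g with rfl | hi
    · simpa using hσ i
    · simpa [update_of_ne hi] using hσ i
  have hxy := dotProduct_pos_of_conforms hσ' (hxσ.of_update_of_neg (not_le.1 hxg))
    (hyσ.of_update_of_neg (not_le.1 hyg)) hxe hye
  rw [hV] at hx
  exact absurd (hx.2 y hy) hxy.ne'

end Minty

section Elementary

variable {𝕜 ι : Type*} [Field 𝕜] [Fintype ι]

def IsElementary (U : Submodule 𝕜 (ι → 𝕜)) (x : ι → 𝕜) : Prop :=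
  ∀ v ∈ U, support v ⊆ support x → ∃ c : 𝕜, v = c • x

variable [LinearOrder 𝕜] [IsStrictOrderedRing 𝕜]

lemma exists_conforms_sub_smul {σ x w : ι → 𝕜} (hx : Conforms σ x) (hw : support w ⊆ support x)
    (hpos : ∃ i, 0 < σ i * w i) :
    ∃ t : 𝕜, Conforms σ (x - t • w) ∧ ∃ i, x i ≠ 0 ∧ (x - t • w) i = 0 := by
  classical
  -- ratio test: `t = x i₀ / w i₀` is the largest step keeping `x - t • w` conforming
  obtain ⟨i₀, hi₀, hmin⟩ := (Finset.univ.filter fun i => 0 < σ i * w i).exists_min_image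
    (fun i => x i / w i) (by simpa [Finset.Nonempty] using hpos)
  simp only [Finset.mem_filter, Finset.mem_univ, true_and] at hi₀ hmin
  have hw₀ : w i₀ ≠ 0 := by rintro h; simp [h] at hi₀
  have ht : 0 ≤ x i₀ / w i₀ := by
    rw [← mul_div_mul_left _ _ (left_ne_zero_of_mul hi₀.ne')]
    exact div_nonneg (hx i₀) hi₀.le
  refine ⟨x i₀ / w i₀, fun i => ?_, i₀, hw hw₀, by simp [hw₀]⟩
  simp only [Pi.sub_apply, Pi.smul_apply, smul_eq_mul]
  by_cases hi : 0 < σ i * w i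
  · have hwi : w i ≠ 0 := by rintro h; simp [h] at hi
    convert mul_nonneg hi.le (sub_nonneg.2 (hmin i hi)) using 1
    field_simp
  · nlinarith [hx i]

lemma exists_conforms_support_ssubset {U : Submodule 𝕜 (ι → 𝕜)} {σ x : ι → 𝕜}
    (hσ : ∀ i, σ i ≠ 0) (hxU : x ∈ U) (hx : Conforms σ x) {e : ι} (hxe : x e ≠ 0)
    (hnot : ¬IsElementary U x) :
    ∃ x' ∈ U, Conforms σ x' ∧ x' e ≠ 0 ∧ support x' ⊂ support x := by
  simp only [IsElementary, not_forall, exists_prop] at hnot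
  obtain ⟨v, hvU, hvx, hv⟩ := hnot
  set w := v - (v e / x e) • x
  have hwU : w ∈ U := U.sub_mem hvU (U.smul_mem _ hxU)
  have hwe : w e = 0 := by simp [w, hxe]
  have hwx : support w ⊆ support x :=
    (support_sub _ _).trans (Set.union_subset hvx (support_smul_subset_right _ _))
  have hw0 : ∃ i, w i ≠ 0 := by
    by_contra! h
    exact hv ⟨v e / x e, sub_eq_zero.1 (funext h)⟩
  obtain ⟨w', hw'U, hw'e, hw'x, hpos⟩ :
      ∃ w' ∈ U, w' e = 0 ∧ support w' ⊆ support x ∧ ∃ i, 0 < σ i * w' i := by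
    obtain ⟨i, hi⟩ := hw0
    rcases (mul_ne_zero (hσ i) hi).lt_or_gt with hneg | hpos
    · exact ⟨-w, U.neg_mem hwU, by simp [hwe], by rwa [support_neg], i, by simpa using hneg⟩
    · exact ⟨w, hwU, hwe, hwx, i, hpos⟩
  obtain ⟨t, hconf, i, hxi, hi⟩ := exists_conforms_sub_smul hx hw'x hpos
  refine ⟨x - t • w', U.sub_mem hxU (U.smul_mem _ hw'U), hconf, by simpa [hw'e] using hxe,
    ?_⟩
  exact (Set.ssubset_iff_of_subset ((support_sub _ _).trans
    (Set.union_subset le_rfl ((support_smul_subset_right _ _).trans hw'x)))).2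
    ⟨i, hxi, fun h => h hi⟩

lemma exists_isElementary_conforms {U : Submodule 𝕜 (ι → 𝕜)} {σ x₀ : ι → 𝕜}
    (hσ : ∀ i, σ i ≠ 0) (hx₀U : x₀ ∈ U) (hx₀ : Conforms σ x₀) {e : ι} (hx₀e : x₀ e ≠ 0) :
    ∃ x ∈ U, IsElementary U x ∧ Conforms σ x ∧ x e ≠ 0 := by
  induction h : (support x₀).ncard using Nat.strong_induction_on generalizing x₀ with
  | _ n ih =>
    by_cases hel : IsElementary U x₀
    · exact ⟨x₀, hx₀U, hel, hx₀, hx₀e⟩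
    obtain ⟨x', hx'U, hx', hx'e, hss⟩ := exists_conforms_support_ssubset hσ hx₀U hx₀ hx₀e hel
    exact ih _ (h ▸ Set.ncard_lt_ncard hss (Set.toFinite _)) hx'U hx' hx'e rfl

end Elementary

section TotallyUnimodular

variable {R : Type*} [CommRing R]

lemma mul_mem_range_signType_cast {a b : R} (ha : a ∈ Set.range SignType.cast)
    (hb : b ∈ Set.range SignType.cast) : a * b ∈ Set.range SignType.cast := by
  obtain ⟨s, rfl⟩ := ha
  obtain ⟨t, rfl⟩ := hb
  exact ⟨s * t, SignType.coe_mul s t⟩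

lemma mul_self_eq_one_of_mem_range_signType_cast {a : R} (ha : a ∈ Set.range SignType.cast)
    (ha0 : a ≠ 0) : a * a = 1 := by
  obtain ⟨t, rfl⟩ := ha
  cases t <;> simp_all

variable {ι κ : Type*} [Fintype κ] [DecidableEq κ]

lemma Matrix.IsTotallyUnimodular.det_updateCol_single_mem [DecidableEq ι] {N : Matrix ι κ R}
    (hN : N.IsTotallyUnimodular) (σ : κ → ι) (i₀ : ι) (j : κ) :
    ((N.submatrix σ id).updateCol j fun k => (Pi.single i₀ 1 : ι → R) (σ k)).det ∈
      Set.range SignType.cast := by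
  have : ((N.submatrix σ id).updateCol j fun k => (Pi.single i₀ 1 : ι → R) (σ k)) =
      (fromCols N 1).submatrix σ fun j' => if j' = j then .inr i₀ else .inl j' := by
    ext k j'
    by_cases h : j' = j
    · subst h
      simp [one_apply, Pi.single_apply, eq_comm]
    · simp [h]
  rw [this]
  exact (isTotallyUnimodular_iff_fintype _).1 hN.fromCols_one κ _ _

variable [Fintype ι] {K : Type*} [Field K]

lemma exists_isUnit_det_submatrix_of_injective (M : Matrix ι κ K) (hM : Injective M.mulVec) :
    ∃ σ : κ → ι, IsUnit (M.submatrix σ id).det := by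
  have hrank : Module.finrank K (Submodule.span K (Set.range M.row)) = Fintype.card κ := by
    rw [← rank_eq_finrank_span_row, ← rank_transpose]
    exact LinearIndependent.rank_matrix (by rwa [row_transpose, ← mulVec_injective_iff])
  obtain ⟨f, hfrow, -, hf⟩ := Submodule.exists_fun_fin_finrank_span_eq K (Set.range M.row)
  choose τ hτ using hfrow
  let e := Fintype.equivFinOfCardEq hrank.symm
  refine ⟨τ ∘ e, (isUnit_iff_isUnit_det _).1 (linearIndependent_rows_iff_isUnit.1 ?_)⟩
  have : (M.submatrix (τ ∘ e) id).row = f ∘ e := funext fun j => hτ (e j)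
  rw [this]
  exact hf.comp e e.injective

variable [DecidableEq ι]

theorem Matrix.IsTotallyUnimodular.exists_sign_eq_of_mulVec_eq_single {N : Matrix ι κ ℤ}
    (hN : N.IsTotallyUnimodular) (hinj : Injective (N.map (Int.cast : ℤ → K)).mulVec)
    {i₀ : ι} {s : ℤ} (hs : s ∈ Set.range SignType.cast) {y : κ → K}
    (hy : N.map Int.cast *ᵥ y = Pi.single i₀ (s : K)) :
    ∃ z : κ → ℤ, (∀ j, z j ∈ Set.range SignType.cast) ∧ Int.cast ∘ z = y := by
  -- Cramer's rule on a regular square subsystem `N'`, whose determinant is a unit sign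
  obtain ⟨σ, hσ⟩ := exists_isUnit_det_submatrix_of_injective _ hinj
  set N' := N.submatrix σ id
  have hdet : N'.det ∈ Set.range SignType.cast := (isTotallyUnimodular_iff_fintype N).1 hN κ σ id
  have hdet2 : N'.det * N'.det = 1 := by
    refine mul_self_eq_one_of_mem_range_signType_cast hdet fun h => hσ.ne_zero ?_
    have := (Int.castRingHom K).map_det N'
    rw [h, map_zero] at this
    exact this.symm
  set b : κ → ℤ := fun k => (Pi.single i₀ 1 : ι → ℤ) (σ k)
  refine ⟨N'.det • s • N'.cramer b, fun j => ?_, ?_⟩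
  · simp only [Pi.smul_apply, smul_eq_mul, cramer_apply]
    exact mul_mem_range_signType_cast hdet
      (mul_mem_range_signType_cast hs (hN.det_updateCol_single_mem σ i₀ j))
  have hz : N' *ᵥ (N'.det • s • N'.cramer b) = s • b := by
    rw [mulVec_smul, mulVec_smul, mulVec_cramer]
    ext k
    simp only [Pi.smul_apply, smul_eq_mul]
    linear_combination (s * b k) * hdet2
  apply mulVec_injective_iff_isUnit.2 ((isUnit_iff_isUnit_det _).2 hσ)
  ext k
  have h := RingHom.map_mulVec (Int.castRingHom K) N' (N'.det • s • N'.cramer b) k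
  simp only [Int.coe_castRingHom, hz] at h
  change (N'.map Int.cast *ᵥ _) k = (N.map Int.cast *ᵥ y) (σ k)
  rw [← h, hy]
  simp [b, Pi.single_apply]

theorem Matrix.IsTotallyUnimodular.exists_sign_eq_of_pinned {N : Matrix ι κ ℤ}
    (hN : N.IsTotallyUnimodular) (T : Set κ) [DecidablePred (· ∈ T)] {e : κ} (he : e ∈ T)
    {s : ℤ} (hs : s ∈ Set.range SignType.cast) {y : κ → K} (hy : N.map Int.cast *ᵥ y = 0)
    (hyT : ∀ j ∈ T, j ≠ e → y j = 0) (hye : y e = s)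
    (huniq : ∀ w : κ → K, N.map Int.cast *ᵥ w = 0 → (∀ j ∈ T, w j = 0) → w = 0) :
    ∃ z : κ → ℤ, (∀ j, z j ∈ Set.range SignType.cast) ∧ Int.cast ∘ z = y := by
  set P : Matrix κ κ ℤ := diagonal fun j => if j ∈ T then 1 else 0
  have hP : ∀ w : κ → K, ∀ j, (P.map Int.cast *ᵥ w) j = if j ∈ T then w j else 0 := by
    intro w j
    split_ifs with h <;> simp [P, diagonal_map, mulVec_diagonal, h]
  have hM : ∀ w : κ → K, (fromRows N P).map Int.cast *ᵥ w = 0 ↔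
      N.map Int.cast *ᵥ w = 0 ∧ ∀ j ∈ T, w j = 0 := by
    intro w
    rw [fromRows_map, fromRows_mulVec, ← Sum.elim_zero_zero, Sum.elim_eq_iff]
    refine and_congr Iff.rfl ⟨fun h j hj => ?_, fun h => funext fun j => ?_⟩
    · simpa [hP, hj] using congr_fun h j
    · rw [hP]
      split_ifs with hj
      exacts [h j hj, rfl]
  have hNP : (fromRows N P).IsTotallyUnimodular :=
    hN.fromRows_unitlike fun _ j => ⟨j, if j ∈ T then 1 else 0, by
      ext k
      split_ifs with h <;> simp [P, h, diagonal_apply, Pi.single_apply, eq_comm]⟩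
  refine hNP.exists_sign_eq_of_mulVec_eq_single (i₀ := .inr e) (fun w w' h => ?_) hs ?_
  · rw [← sub_eq_zero, ← mulVec_sub] at h
    exact sub_eq_zero.1 (huniq _ ((hM _).1 h).1 ((hM _).1 h).2)
  · rw [fromRows_map, fromRows_mulVec, hy]
    ext (i | j)
    · simp
    · simp only [Sum.elim_inr, hP, Pi.single_apply, Sum.inr.injEq]
      by_cases hj : j = e
      · simp [hj, he, hye]
      · by_cases hjT : j ∈ T <;> simp [hj, hjT, hyT]

end TotallyUnimodular

lemma signVec_iff {m : ℕ} {z : Fin m → ℤ} :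
    SignVec z ↔ ∀ i, z i ∈ Set.range SignType.cast := by
  simp only [SignVec, SignType.range_eq, Set.mem_insert_iff, Set.mem_singleton_iff]
  exact forall_congr' fun i => by tauto

lemma intCast_comp_mulVec {K ρ ι : Type*} [Ring K] [Fintype ι] (A : Matrix ρ ι ℤ) (v : ι → ℤ) :
    Int.cast ∘ (A *ᵥ v) = A.map (Int.cast : ℤ → K) *ᵥ (Int.cast ∘ v) :=
  funext fun i => by simpa using RingHom.map_mulVec (Int.castRingHom K) A v i

lemma intCast_comp_vecMul {K ρ ι : Type*} [Ring K] [Fintype ρ] (A : Matrix ρ ι ℤ) (u : ρ → ℤ) :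
    Int.cast ∘ (u ᵥ* A) = (Int.cast ∘ u) ᵥ* A.map (Int.cast : ℤ → K) :=
  funext fun i => by simpa using RingHom.map_vecMul (Int.castRingHom K) A u i

lemma vecMul_injective_of_rank_eq {K ρ ι : Type*} [Field K] [Fintype ρ] [Fintype ι]
    (B : Matrix ρ ι K) (h : B.rank = Fintype.card ρ) : Injective B.vecMul :=
  vecMul_injective_iff.2 <| linearIndependent_iff_card_eq_finrank_span.2 <| by
    rw [Set.finrank, ← rank_eq_finrank_span_row, h]

lemma support_eq_of_isElementary {K ι : Type*} [Field K] [CharZero K]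
    {U : Submodule K (ι → K)} {x : ι → K} (hx : IsElementary U x) {z : ι → ℤ} {c : K}
    (hc : c ≠ 0) (hz : Int.cast ∘ z = c • x) {v : ι → ℤ} (hv : v ≠ 0) (hvU : Int.cast ∘ v ∈ U)
    (hvz : {i | v i ≠ 0} ⊆ {i | z i ≠ 0}) : {i | v i ≠ 0} = {i | z i ≠ 0} := by
  have hzx : ∀ i, z i ≠ 0 ↔ x i ≠ 0 := fun i => by
    rw [← Int.cast_ne_zero (α := K), ← Function.comp_apply (f := Int.cast), hz]
    simp [hc]
  obtain ⟨c', hc'⟩ := hx _ hvU fun i hi => (hzx i).1 (hvz (by simpa using hi))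
  refine hvz.antisymm fun i hi => ?_
  have hc'0 : c' ≠ 0 := by
    rintro rfl
    exact hv (funext fun j => by simpa using congr_fun hc' j)
  have := congr_fun hc' i
  simp only [Function.comp_apply, Pi.smul_apply, smul_eq_mul] at this
  exact fun hvi => mul_ne_zero hc'0 ((hzx i).1 hi) (by rw [← this, hvi, Int.cast_zero])

section Regular

variable {r m : ℕ} (A : Matrix (Fin r) (Fin m) ℤ)

lemma IsOrientation.ne_zero {O : Fin m → ℤ} (hO : IsOrientation O) (f : Fin m) : O f ≠ 0 := by
  rcases hO f with h | h <;> simp [h]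

lemma IsOrientation.mem_range_signType_cast {O : Fin m → ℤ} (hO : IsOrientation O) (f : Fin m) :
    O f ∈ Set.range SignType.cast := by
  rcases hO f with h | h
  exacts [⟨1, by simp [h]⟩, ⟨-1, by simp [h]⟩]

theorem exists_isCircuit_of_isElementary (hA : A.IsTotallyUnimodular) {x : Fin m → ℝ}
    (hxU : x ∈ LinearMap.ker (A.map Int.cast).mulVecLin)
    (hx : IsElementary (LinearMap.ker (A.map Int.cast).mulVecLin) x) {e : Fin m} (hxe : x e ≠ 0)
    {s : ℤ} (hs : s ∈ Set.range SignType.cast) (hs0 : s ≠ 0) :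
    ∃ C, IsCircuit A C ∧ Int.cast ∘ C = ((s : ℝ) / x e) • x := by
  classical
  rw [LinearMap.mem_ker, mulVecLin_apply] at hxU
  obtain ⟨C, hC, hCx⟩ := hA.exists_sign_eq_of_pinned {f | x f = 0 ∨ f = e} (Or.inr rfl) hs
    (y := ((s : ℝ) / x e) • x) (by rw [mulVec_smul, hxU, smul_zero])
    (fun f hf hfe => by simp [hf.resolve_right hfe])
    (by rw [Pi.smul_apply, smul_eq_mul, div_mul_cancel₀ _ hxe])
    fun w hw hwT => by
      obtain ⟨c, rfl⟩ := hx w hw fun f hf => fun hxf => hf (hwT f (.inl hxf))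
      have := hwT e (.inr rfl)
      simp only [Pi.smul_apply, smul_eq_mul, mul_eq_zero, hxe, or_false] at this
      rw [this, zero_smul]
  have hCe : C e = s := by
    have := congr_fun hCx e
    rw [Function.comp_apply, Pi.smul_apply, smul_eq_mul, div_mul_cancel₀ _ hxe] at this
    exact_mod_cast this
  have hAC : A *ᵥ C = 0 := by
    have := intCast_comp_mulVec (K := ℝ) A C
    rw [hCx, mulVec_smul, hxU, smul_zero] at this
    exact funext fun i => by simpa using congr_fun this i
  refine ⟨C, ⟨signVec_iff.2 hC, fun h => hs0 (by simp [← hCe, h]), hAC,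
    fun v hv hAv hvC => ?_⟩, hCx⟩
  refine support_eq_of_isElementary hx (div_ne_zero (Int.cast_ne_zero.2 hs0) hxe) hCx hv ?_ hvC
  rw [LinearMap.mem_ker, mulVecLin_apply, ← intCast_comp_mulVec, hAv]
  exact funext fun _ => Int.cast_zero

/-- With `c = s / x e`, the pair `(-c • u, c • x)` is the unique solution of `Aᵀ u' + d = 0` with
`d` pinned to `0` off the support of `x` and to `s` at `e`; the matrix `[Aᵀ | 1]` is totally
unimodular. -/
lemma exists_sign_eq_sumElim_of_isElementary (hA : A.IsTotallyUnimodular)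
    (hrank : (A.map ((↑) : ℤ → ℝ)).rank = r) {u : Fin r → ℝ} {x : Fin m → ℝ}
    (hu : u ᵥ* A.map Int.cast = x)
    (hx : IsElementary (LinearMap.range (A.map Int.cast).vecMulLinear) x) {e : Fin m}
    (hxe : x e ≠ 0) {s : ℤ} (hs : s ∈ Set.range SignType.cast) :
    ∃ z : Fin r ⊕ Fin m → ℤ, (∀ j, z j ∈ Set.range SignType.cast) ∧
      Int.cast ∘ z = Sum.elim (-(((s : ℝ) / x e) • u)) (((s : ℝ) / x e) • x) := by
  classical
  have hNw : ∀ w : Fin r ⊕ Fin m → ℝ, (fromCols Aᵀ 1).map Int.cast *ᵥ w =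
      (w ∘ Sum.inl) ᵥ* A.map Int.cast + w ∘ Sum.inr := fun w => by
    rw [fromCols_map, fromCols_mulVec, transpose_map, mulVec_transpose]
    simp
  refine hA.transpose.fromCols_one.exists_sign_eq_of_pinned (Sum.inr '' {f | x f = 0 ∨ f = e})
    ⟨e, .inr rfl, rfl⟩ hs (by rw [hNw]; simp [neg_vecMul, smul_vecMul, hu]) ?_
    (by simp [hxe]) fun w hw hwT => ?_
  · rintro _ ⟨f, hf, rfl⟩ hfe
    simp [hf.resolve_right fun h => hfe (h ▸ rfl)]
  have hd : w ∘ Sum.inr = (-(w ∘ Sum.inl)) ᵥ* A.map Int.cast := by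
    rw [hNw] at hw
    rw [neg_vecMul, eq_neg_iff_add_eq_zero, add_comm, hw]
  obtain ⟨c, hc⟩ := hx _ ⟨_, hd.symm⟩ fun f hf hxf => hf (hwT _ ⟨f, .inl hxf, rfl⟩)
  have hc0 : c = 0 := by
    simpa [hwT _ ⟨e, .inr rfl, rfl⟩, hxe] using (congr_fun hc e).symm
  rw [hc0, zero_smul] at hc
  have hl : w ∘ Sum.inl = 0 := by
    refine vecMul_injective_of_rank_eq _ (by rw [hrank, Fintype.card_fin]) ?_
    change (w ∘ Sum.inl) ᵥ* _ = 0 ᵥ* _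
    rw [zero_vecMul, ← neg_eq_zero, ← neg_vecMul, ← hd, hc]
  ext (i | f)
  exacts [congr_fun hl i, congr_fun hc f]

theorem exists_isCocircuit_of_isElementary (hA : A.IsTotallyUnimodular)
    (hrank : (A.map ((↑) : ℤ → ℝ)).rank = r) {x : Fin m → ℝ}
    (hxU : x ∈ LinearMap.range (A.map Int.cast).vecMulLinear)
    (hx : IsElementary (LinearMap.range (A.map Int.cast).vecMulLinear) x) {e : Fin m}
    (hxe : x e ≠ 0) {s : ℤ} (hs : s ∈ Set.range SignType.cast) (hs0 : s ≠ 0) :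
    ∃ D, IsCocircuit A D ∧ Int.cast ∘ D = ((s : ℝ) / x e) • x := by
  obtain ⟨u, hu⟩ := hxU
  rw [vecMulLinear_apply] at hu
  obtain ⟨z, hz, hzy⟩ := exists_sign_eq_sumElim_of_isElementary A hA hrank hu hx hxe hs
  have hDx : Int.cast ∘ (z ∘ Sum.inr) = ((s : ℝ) / x e) • x :=
    funext fun f => congr_fun hzy (.inr f)
  have hDe : z (.inr e) = s := by
    have := congr_fun hDx e
    rw [Function.comp_apply, Pi.smul_apply, smul_eq_mul, div_mul_cancel₀ _ hxe] at this
    exact_mod_cast this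
  have hDrow : z ∘ Sum.inr = (-(z ∘ Sum.inl)) ᵥ* A := by
    refine (Int.cast_injective (α := ℝ)).comp_left ?_
    have hl : Int.cast ∘ (-(z ∘ Sum.inl)) = ((s : ℝ) / x e) • u := funext fun i => by
      simpa using congr_arg Neg.neg (congr_fun hzy (.inl i))
    change Int.cast ∘ (z ∘ Sum.inr) = Int.cast ∘ ((-(z ∘ Sum.inl)) ᵥ* A)
    rw [hDx, intCast_comp_vecMul, hl, smul_vecMul, hu]
  refine ⟨z ∘ Sum.inr, ⟨signVec_iff.2 fun f => hz _, fun h => hs0 (hDe ▸ congr_fun h e),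
    ⟨_, hDrow⟩, fun v hv ⟨y, hy⟩ hvD => ?_⟩, hDx⟩
  refine support_eq_of_isElementary hx (div_ne_zero (Int.cast_ne_zero.2 hs0) hxe) hDx hv
    ⟨Int.cast ∘ y, ?_⟩ hvD
  rw [vecMulLinear_apply, ← intCast_comp_vecMul, hy]

lemma conforms_of_agrees {O z : Fin m → ℤ} (h : ∀ f, z f ≠ 0 → O f = z f) : Conforms O z := by
  intro f
  by_cases hf : z f = 0
  · simp [hf]
  · rw [h f hf]
    exact mul_self_nonneg _

lemma agrees_of_conforms {O : Fin m → ℤ} (hO : IsOrientation O) {z : Fin m → ℤ}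
    (hz : SignVec z) {x : Fin m → ℝ} (hx : Conforms (fun f => (O f : ℝ)) x) {e : Fin m}
    (hxe : x e ≠ 0) (hzx : Int.cast ∘ z = ((O e : ℝ) / x e) • x) :
    z e ≠ 0 ∧ ∀ f, z f ≠ 0 → O f = z f := by
  have hzf : ∀ f, (z f : ℝ) = O e / x e * x f := fun f => by simpa using congr_fun hzx f
  refine ⟨fun h => hO.ne_zero e ?_, fun f hf => ?_⟩
  · have := hzf e
    rwa [h, div_mul_cancel₀ _ hxe, Int.cast_zero, eq_comm, Int.cast_eq_zero] at this
  have hOe : 0 < (O e : ℝ) * x e :=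
    (hx e).lt_of_ne (mul_ne_zero (Int.cast_ne_zero.2 (hO.ne_zero e)) hxe).symm
  have hOz : (O f : ℝ) * z f = (O e * x e) * (O f * x f) / (x e * x e) := by
    rw [hzf]
    field_simp
  have : 0 ≤ O f * z f := by
    have : (0 : ℝ) ≤ O f * z f := by
      rw [hOz]
      exact div_nonneg (mul_nonneg hOe.le (hx f)) (mul_self_nonneg _)
    exact_mod_cast this
  rcases hO f with h | h <;> rcases hz f with h' | h' | h' <;> simp_all

theorem not_agreeing_circuit_and_cocircuit {O : Fin m → ℤ} (hO : ∀ f, O f ≠ 0) (e : Fin m) :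
    ¬((∃ C, IsCircuit A C ∧ C e ≠ 0 ∧ ∀ f, C f ≠ 0 → O f = C f) ∧
      (∃ D, IsCocircuit A D ∧ D e ≠ 0 ∧ ∀ f, D f ≠ 0 → O f = D f)) := by
  rintro ⟨⟨C, hC, hCe, hCO⟩, ⟨D, hD, hDe, hDO⟩⟩
  obtain ⟨y, rfl⟩ := hD.2.2.1
  have := dotProduct_pos_of_conforms hO (conforms_of_agrees hDO) (conforms_of_agrees hCO) hDe hCe
  rw [← dotProduct_mulVec, hC.2.2.1, dotProduct_zero] at this
  exact this.false

end Regular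

/-- For every orientation `O` and every element `e`, exactly one of the following holds:
`e` lies in the support of a signed circuit compatible with `O`, or `e` lies in the support
of a signed cocircuit compatible with `O`. -/
theorem stmt19 {r m : ℕ} (A : Matrix (Fin r) (Fin m) ℤ)
    (hTU : A.IsTotallyUnimodular) (hrank : (A.map ((↑) : ℤ → ℝ)).rank = r)
    (O : Fin m → ℤ) (hO : IsOrientation O) (e : Fin m) :
    Xor' (∃ C : Fin m → ℤ, IsCircuit A C ∧ C e ≠ 0 ∧ ∀ f, C f ≠ 0 → O f = C f)
         (∃ D : Fin m → ℤ, IsCocircuit A D ∧ D e ≠ 0 ∧ ∀ f, D f ≠ 0 → O f = D f) := by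
  have hσ : ∀ f, (O f : ℝ) ≠ 0 := fun f => Int.cast_ne_zero.2 (hO.ne_zero f)
  refine (xor_iff_or_and_not_and _ _).2 ⟨?_, not_agreeing_circuit_and_cocircuit A hO.ne_zero e⟩
  rcases minty Finset.univ (ker_mulVecLin_eq_orthogonalOn (A.map Int.cast))
    (range_vecMulLinear_eq_orthogonalOn _) hσ (Finset.mem_univ e) with
    ⟨x₀, hx₀, hx₀O, hx₀e⟩ | ⟨x₀, hx₀, hx₀O, hx₀e⟩
  · obtain ⟨x, hxU, hx, hxO, hxe⟩ := exists_isElementary_conforms hσ hx₀ hx₀O hx₀e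
    obtain ⟨C, hC, hCx⟩ := exists_isCircuit_of_isElementary A hTU hxU hx hxe
      (hO.mem_range_signType_cast e) (hO.ne_zero e)
    exact .inl ⟨C, hC, agrees_of_conforms hO hC.1 hxO hxe hCx⟩
  · obtain ⟨x, hxU, hx, hxO, hxe⟩ := exists_isElementary_conforms hσ hx₀ hx₀O hx₀e
    obtain ⟨D, hD, hDx⟩ := exists_isCocircuit_of_isElementary A hTU hrank hxU hx hxe
      (hO.mem_range_signType_cast e) (hO.ne_zero e)
    exact .inr ⟨D, hD, agrees_of_conforms hO hD.1 hxO hxe hDx⟩
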